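/- arXiv:0704.3561 — 4 statements merged into one kernel-verified Lean document; each statement's English description precedes it below -/
import Mathlib

section
/- Let R be a principal ideal domain and let 0 → A → B → C → 0 be a short exact sequence of R-modules (A is a submodule of B with quotient C). Then: (i) if A and C are free R-modules, so is B; (ii) if every finite-rank submodule of A is free and every finite-rank submodule of C is free, then every finite-rank submodule of B is free. -/
noncomputable def splitEquiv {R : Type*} [Ring R] {B : Type*} [AddCommGroup B] [Module R B]
    (A : Submodule R B) (s : (B ⧸ A) →ₗ[R] B) (hs : A.mkQ ∘ₗ s = LinearMap.id) :
    B ≃ₗ[R] A × (B ⧸ A) where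
  toFun b := (⟨b - s (A.mkQ b), by
      have h : A.mkQ (b - s (A.mkQ b)) = 0 := by
        have := LinearMap.congr_fun hs (A.mkQ b)
        simp only [LinearMap.comp_apply, LinearMap.id_apply] at this
        rw [map_sub, this, sub_self]
      rwa [← Submodule.Quotient.mk_eq_zero A, ← Submodule.mkQ_apply]⟩, A.mkQ b)
  invFun p := (p.1 : B) + s p.2
  map_add' x y := by
    ext <;> simp [map_add] <;> abel
  map_smul' r x := by
    ext <;> simp [map_smul, smul_sub]
  left_inv b := by simp
  right_inv p := by
    have h1 : A.mkQ (s p.2) = p.2 := by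
      have := LinearMap.congr_fun hs p.2
      simpa using this
    have h2 : A.mkQ (p.1 : B) = 0 := by
      simpa [Submodule.mkQ_apply, Submodule.Quotient.mk_eq_zero] using p.1.2
    have h1' : (Submodule.Quotient.mk (s p.2) : B ⧸ A) = p.2 := h1
    have h2' : (Submodule.Quotient.mk (p.1 : B) : B ⧸ A) = 0 := h2
    ext
    · simp [map_add, h1', h2']
    · simp [map_add, h1', h2']

lemma free_ext {R : Type*} [Ring R] {B : Type*} [AddCommGroup B] [Module R B]
    (A : Submodule R B) (hA : Module.Free R A) (hQ : Module.Free R (B ⧸ A)) :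
    Module.Free R B := by
  obtain ⟨s, hs⟩ := Module.projective_lifting_property A.mkQ (LinearMap.id)
    (Submodule.mkQ_surjective A)
  exact Module.Free.of_equiv (splitEquiv A s hs).symm


/-- Extensions of free modules over a PID are free, and extensions of
locally free modules (every finite-rank submodule is free) are locally free. Here the
short exact sequence `0 → A → B → C → 0` is realised by a submodule `A` of `B` with
quotient `C = B ⧸ A`, and a submodule has finite rank when it contains no infinite
linearly independent family. -/
theorem free_and_locally_free_extensions
    (R : Type*) [CommRing R] [IsDomain R] [IsPrincipalIdealRing R]
    (B : Type*) [AddCommGroup B] [Module R B] (A : Submodule R B) :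
    -- (i) if `A` and `B ⧸ A` are free, then `B` is free:
    ((Module.Free R A → Module.Free R (B ⧸ A) → Module.Free R B) ∧
    -- (ii) if every finite-rank submodule of `A` and of `B ⧸ A` is free, then every
    -- finite-rank submodule of `B` is free:
    ((∀ N : Submodule R B, N ≤ A →
        (¬ ∃ f : ℕ → N, LinearIndependent R f) → Module.Free R N) →
      (∀ N : Submodule R (B ⧸ A),
        (¬ ∃ f : ℕ → N, LinearIndependent R f) → Module.Free R N) →
      ∀ N : Submodule R B,
        (¬ ∃ f : ℕ → N, LinearIndependent R f) → Module.Free R N)) := by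
  constructor
  · exact fun hA hQ => free_ext A hA hQ
  · intro hA hQ N hN
    -- the submodule `K = N ∩ A` viewed inside `N`
    set K : Submodule R N := A.comap N.subtype with hK
    -- `K` is free
    have hKfree : Module.Free R K := by
      have hle : A ⊓ N ≤ A := inf_le_left
      have hfree : Module.Free R (A ⊓ N : Submodule R B) := by
        apply hA _ hle
        rintro ⟨f, hf⟩
        apply hN
        refine ⟨fun n => Submodule.inclusion inf_le_right (f n), ?_⟩
        exact hf.map' (Submodule.inclusion inf_le_right) (Submodule.ker_inclusion _ _ _)
      have heq : Submodule.comap N.subtype (A ⊓ N) = K := by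
        simp [hK, Submodule.comap_inf, Submodule.comap_subtype_self]
      have e := Submodule.comapSubtypeEquivOfLe (inf_le_right : A ⊓ N ≤ N)
      rw [heq] at e
      exact Module.Free.of_equiv e.symm
    -- the quotient `N ⧸ K` is free
    have hQfree : Module.Free R (N ⧸ K) := by
      set φ : N →ₗ[R] B ⧸ A := A.mkQ ∘ₗ N.subtype with hφ
      have hker : LinearMap.ker φ = K := by
        rw [hφ, LinearMap.ker_comp, Submodule.ker_mkQ]
      have hrange : Module.Free R (LinearMap.range φ) := by
        apply hQ
        rintro ⟨f, hf⟩
        apply hN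
        -- lift each `f n` to an element of `N`
        have hmem : ∀ n, ∃ x : N, φ x = (f n : B ⧸ A) := fun n => (f n).2
        choose g hg using hmem
        refine ⟨g, ?_⟩
        apply LinearIndependent.of_comp (N.subtype)
        apply LinearIndependent.of_comp (A.mkQ)
        have : (A.mkQ ∘ N.subtype ∘ g) = fun n => ((f n : B ⧸ A)) := by
          funext n; exact hg n
        rw [this]
        exact hf.map' (LinearMap.range φ).subtype (Submodule.ker_subtype _)
      have e := (φ.quotKerEquivRange)
      rw [hker] at e
      exact Module.Free.of_equiv e.symm
    exact free_ext K hKfree hQfree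
end

section
/- Let R be a principal ideal domain, M a torsion-free R-module, and A a finitely generated submodule of M. Then A is pure in M (i.e., every x ∈ M with n·x ∈ A for some nonzero n ∈ R lies in A) if and only if every element a ∈ A that is simple in A is simple in M. -/
/-- An element `a` of a torsion-free `R`-module `M` is *simple in `M`* if `a ≠ 0` and the
cyclic submodule `R·a` is pure in `M`. -/
def IsSimpleIn (R : Type*) {M : Type*} [CommRing R] [AddCommGroup M] [Module R M]
    (a : M) : Prop :=
  a ≠ 0 ∧ ∀ (x : M) (n : R), n ≠ 0 → n • x ∈ Submodule.span R {a} →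
    x ∈ Submodule.span R {a}

/-!
If `A` is pure in `M`, purity of `R ∙ a` inside `A` passes up to `M`. Conversely, `A` is finitely
generated and torsion-free over a PID, hence free. In a free module every `y ≠ 0` is `g • a` with
`f a = 1` for some functional `f` (take `g` a generator of the ideal `{f y}`), and such an `a`
is simple. So if `n • x ∈ A`, write `n • x = g • a` with `a` simple in `A`; then `a` is simple in
`M` and `x ∈ R ∙ a ⊆ A`.
-/

section

variable {R M : Type*} [CommRing R] [AddCommGroup M] [Module R M]

def Submodule.IsPure (A : Submodule R M) : Prop :=
  ∀ (x : M) (n : R), n ≠ 0 → n • x ∈ A → x ∈ A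

theorem Submodule.IsPure.map_subtype {A : Submodule R M} (hA : A.IsPure) {B : Submodule R A}
    (hB : B.IsPure) : (B.map A.subtype).IsPure := by
  intro x n hn hx
  obtain ⟨y, hy, hyx⟩ := hx
  have hxA : x ∈ A := hA x n hn (hyx ▸ y.2)
  have : n • (⟨x, hxA⟩ : A) = y := Subtype.ext hyx.symm
  exact ⟨⟨x, hxA⟩, hB _ n hn (this ▸ hy), rfl⟩

theorem IsSimpleIn.coe_of_isPure {A : Submodule R M} (hA : A.IsPure) {a : A}
    (ha : IsSimpleIn R a) : IsSimpleIn R (a : M) := by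
  refine ⟨by simpa using ha.1, ?_⟩
  have := hA.map_subtype ha.2
  rwa [Submodule.map_span, Set.image_singleton] at this

theorem isSimpleIn_of_apply_eq_one [IsDomain R] [Module.IsTorsionFree R M] {a : M}
    (f : Module.Dual R M) (hfa : f a = 1) : IsSimpleIn R a := by
  refine ⟨fun h => by simp [h] at hfa, fun x n hn hx => ?_⟩
  obtain ⟨m, hm⟩ := Submodule.mem_span_singleton.mp hx
  have hmn : m = n * f x := by simpa [hfa] using congrArg f hm
  refine Submodule.mem_span_singleton.mpr ⟨f x, smul_right_injective M hn ?_⟩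
  simp only [smul_smul, ← hmn, hm]

theorem Module.Free.exists_eq_smul_of_forall_dvd [Module.Free R M] {g : R} {y : M}
    (h : ∀ f : Module.Dual R M, g ∣ f y) : ∃ a, y = g • a := by
  let b := Module.Free.chooseBasis R M
  suffices y ∈ LinearMap.range (DistribSMul.toLinearMap R M g) by
    obtain ⟨a, ha⟩ := this
    exact ⟨a, ha.symm⟩
  rw [← b.linearCombination_repr y, Finsupp.linearCombination_apply]
  refine Submodule.finsuppSum_mem _ _ _ _ fun i _ => ?_
  obtain ⟨d, hd⟩ := h (b.coord i)
  exact ⟨d • b i, by simp [← b.coord_apply, hd, mul_smul, smul_comm g d]⟩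

theorem Module.Free.exists_eq_smul_and_dual_apply_eq_one [IsDomain R] [IsPrincipalIdealRing R]
    [Module.Free R M] {y : M} (hy : y ≠ 0) :
    ∃ (c : R) (a : M) (f : Module.Dual R M), y = c • a ∧ f a = 1 := by
  let I : Ideal R := LinearMap.range (Module.Dual.eval R M y)
  obtain ⟨f, hf⟩ : Submodule.IsPrincipal.generator I ∈ I := Submodule.IsPrincipal.generator_mem I
  set g := Submodule.IsPrincipal.generator I
  have hdvd : ∀ f' : Module.Dual R M, g ∣ f' y := fun f' =>
    (Submodule.IsPrincipal.mem_iff_generator_dvd I).mp ⟨f', rfl⟩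
  obtain ⟨a, ha⟩ := exists_eq_smul_of_forall_dvd hdvd
  have hg : g ≠ 0 := by
    rintro hg
    rw [hg, zero_smul] at ha
    exact hy ha
  refine ⟨g, a, f, ha, mul_left_cancel₀ hg ?_⟩
  rw [mul_one, ← smul_eq_mul, ← map_smul, ← ha]
  exact hf

end

/-- A finitely generated submodule `A` of a torsion-free module `M`
over a PID is pure in `M` iff every element of `A` that is simple in `A` is simple
in `M`. -/
theorem pure_iff_simple_points
    (R : Type*) [CommRing R] [IsDomain R] [IsPrincipalIdealRing R]
    (M : Type*) [AddCommGroup M] [Module R M] [NoZeroSMulDivisors R M]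
    (A : Submodule R M) (hA : A.FG) :
    (∀ (x : M) (n : R), n ≠ 0 → n • x ∈ A → x ∈ A) ↔
    (∀ a : A, IsSimpleIn R a → IsSimpleIn R (a : M)) := by
  refine ⟨fun hpure a ha => ha.coe_of_isPure hpure, fun hsimple x n hn hnx => ?_⟩
  have : Module.Finite R A := Module.Finite.iff_fg.mpr hA
  by_cases hx : x = 0
  · simp [hx]
  obtain ⟨c, a, f, hca, hfa⟩ :=
    Module.Free.exists_eq_smul_and_dual_apply_eq_one (R := R) (y := (⟨n • x, hnx⟩ : A))
      (by simp [hn, hx])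
  have ha : IsSimpleIn R (a : M) := hsimple a (isSimpleIn_of_apply_eq_one f hfa)
  have hnx_mem : n • x ∈ R ∙ (a : M) :=
    Submodule.mem_span_singleton.mpr ⟨c, by simpa using (congrArg Subtype.val hca).symm⟩
  exact (Submodule.span_singleton_le_iff_mem _ _).mpr a.2 (ha.2 x n hn hnx_mem)
end

section
/- Let R be a principal ideal domain and M a torsion-free R-module every finite-rank submodule of which is free. Suppose A ≤ B ≤ M are submodules with B pure in M and A finitely generated. Let c₁,…,c_k ∈ M be such that the images of c₁,…,c_k in M/B are R-linearly independent. Assume that for all c ∈ span_R(c₁,…,c_k) and all m ∈ R: if there exists x ∈ M with m·x − c ∈ B, then there exists y ∈ M with m·y − c ∈ A. Then the pure hull in M/B of the span of the images of c₁,…,c_k (i.e., {z ∈ M/B | n·z ∈ span_R(c₁/B,…,c_k/B) for some nonzero n ∈ R}) is a free R-module. -/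
/-- The pure hull of a submodule `A` of a module `M` over a domain `R`:
`{x ∈ M | n • x ∈ A for some nonzero n ∈ R}`. -/
def pureHull {R M : Type*} [CommRing R] [IsDomain R] [AddCommGroup M] [Module R M]
    (A : Submodule R M) : Submodule R M where
  carrier := {x : M | ∃ n : R, n ≠ 0 ∧ n • x ∈ A}
  zero_mem' := ⟨1, one_ne_zero, by simp⟩
  add_mem' := by
    rintro x y ⟨n, hn, hx⟩ ⟨m, hm, hy⟩
    refine ⟨n * m, mul_ne_zero hn hm, ?_⟩
    rw [smul_add]
    exact A.add_mem (by rw [mul_comm, mul_smul]; exact A.smul_mem m hx)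
      (by rw [mul_smul]; exact A.smul_mem n hy)
  smul_mem' := by
    rintro r x ⟨n, hn, hx⟩
    exact ⟨n, hn, by rw [smul_comm]; exact A.smul_mem r hx⟩

/-- Let `M` be a torsion-free, locally free module over a PID,
`A ≤ B ≤ M` with `B` pure in `M` and `A` finitely generated, and let `c₁, …, c_k ∈ M`
have linearly independent images in `M/B`. If every extra divisibility modulo `B` of
elements of the span of the `cᵢ` is already witnessed modulo `A`, then the pure hull in
`M/B` of the span of the images of the `cᵢ` is free. -/
theorem pure_hull_in_quotient_free
    (R : Type*) [CommRing R] [IsDomain R] [IsPrincipalIdealRing R]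
    (M : Type*) [AddCommGroup M] [Module R M] [NoZeroSMulDivisors R M]
    -- every finite-rank submodule of `M` is free:
    (hM : ∀ N : Submodule R M,
      (¬ ∃ f : ℕ → N, LinearIndependent R f) → Module.Free R N)
    (A B : Submodule R M) (hAB : A ≤ B)
    (hBpure : ∀ (x : M) (n : R), n ≠ 0 → n • x ∈ B → x ∈ B)
    (hAfg : A.FG)
    (k : ℕ) (c : Fin k → M)
    (hc : LinearIndependent R fun j : Fin k => (Submodule.Quotient.mk (c j) : M ⧸ B))
    (hdiv : ∀ cc ∈ Submodule.span R (Set.range c), ∀ m : R,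
      (∃ x : M, m • x - cc ∈ B) → ∃ y : M, m • y - cc ∈ A) :
    Module.Free R
      (pureHull (Submodule.span R
        (Set.range fun j : Fin k => (Submodule.Quotient.mk (c j) : M ⧸ B)))) := by
  classical
  set C := Submodule.span R (Set.range c) with hC
  set D := A ⊔ C with hD
  set P := pureHull D with hP
  -- the quotient M ⧸ B is torsion-free since B is pure
  haveI : NoZeroSMulDivisors R (M ⧸ B) := by
    constructor
    intro n z h
    by_cases hn : n = 0
    · exact Or.inl hn
    · refine Or.inr ?_
      obtain ⟨x, rfl⟩ := Submodule.Quotient.mk_surjective B z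
      rw [← Submodule.Quotient.mk_smul, Submodule.Quotient.mk_eq_zero] at h
      rw [Submodule.Quotient.mk_eq_zero]
      exact hBpure x n hn h
  -- D is finitely generated
  have hDfg : D.FG := hAfg.sup (Submodule.fg_span (Set.finite_range c))
  haveI hDfin : Module.Finite R D := Module.Finite.iff_fg.mpr hDfg
  -- P has no infinite linearly independent family
  have hPnoinf : ¬ ∃ f : ℕ → P, LinearIndependent R f := by
    rintro ⟨f, hf⟩
    have hfM : LinearIndependent R (fun i : ℕ => ((f i : M))) :=
      hf.map' P.subtype (Submodule.ker_subtype P)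
    choose n hn hmem using fun i => (f i).2
    have key : LinearIndependent R (fun i : ℕ => (⟨n i • (f i : M), hmem i⟩ : D)) := by
      rw [linearIndependent_iff'] at hfM ⊢
      intro s g hg i hi
      have hg' : ∑ j ∈ s, (g j * n j) • ((f j : M)) = 0 := by
        have := congrArg (D.subtype) hg
        simpa [map_sum, mul_smul] using this
      have := hfM s (fun j => g j * n j) hg' i hi
      exact (mul_eq_zero.mp this).resolve_right (hn i)
    exact absurd key.aleph0_le_rank (Module.rank_lt_aleph0 R D).not_ge
  -- P is free, hence finitely generated
  haveI hPfree : Module.Free R P := hM P hPnoinf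
  haveI hPfin : Module.Finite R P := by
    let b := Module.Free.chooseBasis R P
    by_cases hι : Infinite (Module.Free.ChooseBasisIndex R P)
    · exact absurd ⟨fun i => b ((Infinite.natEmbedding _) i),
        b.linearIndependent.comp _ (Infinite.natEmbedding _).injective⟩ hPnoinf
    · haveI : Finite (Module.Free.ChooseBasisIndex R P) := not_infinite_iff_finite.mp hι
      exact Module.Finite.of_basis b
  -- the span of the images of c is the image of C
  have hspan : Submodule.span R (Set.range fun j : Fin k =>
      (Submodule.Quotient.mk (c j) : M ⧸ B)) = Submodule.map B.mkQ C := by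
    rw [hC, Submodule.map_span]
    congr 1
    rw [← Set.range_comp]
    rfl
  -- the pure hull equals the image of P
  have hHeq : pureHull (Submodule.span R (Set.range fun j : Fin k =>
      (Submodule.Quotient.mk (c j) : M ⧸ B))) = Submodule.map B.mkQ P := by
    apply le_antisymm
    · rintro z ⟨m, hm, hz⟩
      rw [hspan] at hz
      obtain ⟨cc, hcc, hcz⟩ := Submodule.mem_map.mp hz
      obtain ⟨x, rfl⟩ := Submodule.Quotient.mk_surjective B z
      have hx : m • x - cc ∈ B := by
        have : (Submodule.Quotient.mk (m • x) : M ⧸ B) = Submodule.Quotient.mk cc := by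
          rw [Submodule.Quotient.mk_smul]
          exact hcz.symm
        have := (Submodule.Quotient.eq B).mp this
        exact this
      obtain ⟨y, hy⟩ := hdiv cc hcc m ⟨x, hx⟩
      refine Submodule.mem_map.mpr ⟨y, ⟨m, hm, ?_⟩, ?_⟩
      · have hmy : m • y = (m • y - cc) + cc := by abel
        rw [hmy]
        exact D.add_mem (le_sup_left (α := Submodule R M) hy)
          (le_sup_right (α := Submodule R M) hcc)
      · show (Submodule.Quotient.mk y : M ⧸ B) = Submodule.Quotient.mk x
        refine (Submodule.Quotient.eq B).mpr ?_
        have hxy : m • (y - x) ∈ B := by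
          have h1 := B.sub_mem (hAB hy) hx
          have h2 : (m • y - cc) - (m • x - cc) = m • (y - x) := by
            rw [smul_sub]; abel
          rwa [h2] at h1
        exact hBpure (y - x) m hm hxy
    · rintro z hz
      obtain ⟨x, hx, rfl⟩ := Submodule.mem_map.mp hz
      obtain ⟨m, hm, hxD⟩ := hx
      refine ⟨m, hm, ?_⟩
      rw [hspan]
      rw [hD, Submodule.mem_sup] at hxD
      obtain ⟨a, ha, cc, hcc, hacc⟩ := hxD
      refine Submodule.mem_map.mpr ⟨cc, hcc, ?_⟩
      show (Submodule.Quotient.mk cc : M ⧸ B) = m • Submodule.Quotient.mk x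
      rw [← Submodule.Quotient.mk_smul]
      refine ((Submodule.Quotient.eq B).mpr ?_).symm
      have : m • x - cc = a := by rw [← hacc]; abel
      rw [this]
      exact hAB ha
  rw [hHeq]
  haveI : Module.Finite R (Submodule.map B.mkQ P) :=
    Module.Finite.iff_fg.mpr ((Module.Finite.iff_fg.mp hPfin).map _)
  exact Module.free_of_finite_type_torsion_free'
end

section
/- Let F be an algebraically closed field, K ⊆ F a perfect subfield containing all roots of unity of F (i.e., the torsion subgroup μ of Fˣ is contained in Kˣ). Let a₁,…,a_k ∈ Kˣ be such that the images of a₁,…,a_k in Kˣ/μ are ℤ-linearly independent and span a pure subgroup of Kˣ/μ (i.e., the tuple is simple in Kˣ modulo μ). Let n ≥ 1 and suppose α = (α₁,…,α_k) and α' = (α'₁,…,α'_k) are tuples in Fˣ with αᵢⁿ = aᵢ = α'ᵢⁿ for each i. Then α and α' have the same field type over K: there is a ring isomorphism from K(α₁,…,α_k) to K(α'₁,…,α'_k) fixing K pointwise and sending each αᵢ to α'ᵢ. -/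
/-!
Write `α'ᵢ = ζᵢ αᵢ`; the `ζᵢ` are `n`-th roots of unity, hence lie in `K`, so `K(α) = K(α') =: L`.
This `L` is the splitting field of `∏ᵢ (Xⁿ - aᵢ)`, so it is Galois over the perfect field `K`, and
Kummer theory applies: `σ ↦ (σ αᵢ / αᵢ)ᵢ` is a homomorphism `Gal(L/K) → μₙᵏ`. A character of
`μₙᵏ` has the form `w ↦ ∏ wᵢ ^ mᵢ`; if it kills the image, then `β = ∏ αᵢ ^ mᵢ` is Galois-invariant,
so `β ∈ K` and `βⁿ = ∏ aᵢ ^ mᵢ`. Purity and independence of the `aᵢ` modulo `μ` then force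
`n ∣ mᵢ`, so the character also kills `ζ`. By duality of finite abelian groups `ζ` lies in the
image, i.e. some `σ ∈ Gal(L/K)` sends `α` to `α'`.
-/

/-- The canonical `ℤ`-module structure on (the additive version of) a quotient of a
commutative group, registered to help instance resolution. -/
instance quotIntModule {G : Type*} [CommGroup G] (P : Subgroup G) :
    Module ℤ (Additive (G ⧸ P)) :=
  AddCommGroup.toIntModule _

/-- Tuples `u` and `v` have the same field type over the subfield `K`: there is a ring
isomorphism `K(u) ≃ K(v)` fixing `K` pointwise and sending `u` to `v` coordinatewise. -/
def SameFieldType {Ω : Type*} [Field Ω] (K : Subfield Ω) {k : ℕ} (u v : Fin k → Ω) : Prop :=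
  ∃ e : Subfield.closure ((K : Set Ω) ∪ Set.range u) ≃+*
        Subfield.closure ((K : Set Ω) ∪ Set.range v),
    (∀ x : Subfield.closure ((K : Set Ω) ∪ Set.range u), (x : Ω) ∈ K → ((e x : Ω) = (x : Ω))) ∧
    ∀ j : Fin k, (e ⟨u j, Subfield.subset_closure (Or.inr ⟨j, rfl⟩)⟩ : Ω) = v j

theorem dvd_of_zpow_eq_prod_zpow {Q ι : Type*} [CommGroup Q] [Fintype ι] {v : ι → Q}
    (hindep : LinearIndependent ℤ fun j => Additive.ofMul (v j))
    (hpure : ∀ (x : Q) (m : ℤ), m ≠ 0 → x ^ m ∈ Subgroup.closure (Set.range v) →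
      x ∈ Subgroup.closure (Set.range v))
    {x : Q} {n : ℤ} (hn : n ≠ 0) {m : ι → ℤ} (hx : x ^ n = ∏ i, v i ^ m i) (i : ι) :
    n ∣ m i := by
  have hxn : x ^ n ∈ Subgroup.closure (Set.range v) :=
    hx ▸ Subgroup.prod_mem _ fun i _ =>
      zpow_mem (Subgroup.subset_closure (Set.mem_range_self i)) _
  obtain ⟨c, rfl⟩ := Subgroup.exists_of_mem_closure_range v x (hpure x n hn hxn)
  have hsum : ∑ i, (n * c i) • Additive.ofMul (v i) = ∑ i, m i • Additive.ofMul (v i) := by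
    simpa [ofMul_prod, ofMul_zpow, ← Finset.prod_zpow, ← zpow_mul, mul_comm] using
      congrArg Additive.ofMul hx
  exact ⟨c i, (Fintype.linearIndependent_iffₛ.1 hindep _ _ hsum i).symm⟩

theorem dvd_of_prod_zpow_mem_range {K F ι : Type*} [Field K] [Field F] [Algebra K F] [Fintype ι]
    {a : ι → Kˣ}
    (hindep : LinearIndependent ℤ fun j => Additive.ofMul (a j : Kˣ ⧸ CommGroup.torsion Kˣ))
    (hpure : ∀ (x : Kˣ ⧸ CommGroup.torsion Kˣ) (m : ℤ), m ≠ 0 →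
      x ^ m ∈ Subgroup.closure (Set.range fun j => (a j : Kˣ ⧸ CommGroup.torsion Kˣ)) →
      x ∈ Subgroup.closure (Set.range fun j => (a j : Kˣ ⧸ CommGroup.torsion Kˣ)))
    {n : ℕ} (hn : n ≠ 0) {α : ι → F} (hα : ∀ i, α i ^ n = algebraMap K F (a i))
    {m : ι → ℤ} (hm : ∏ i, α i ^ m i ∈ Set.range (algebraMap K F)) (i : ι) :
    (n : ℤ) ∣ m i := by
  obtain ⟨c, hc⟩ := hm
  have hα0 (i : ι) : α i ≠ 0 := fun h => (a i).ne_zero <|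
    (map_eq_zero _).1 (by rw [← hα i, h, zero_pow hn])
  have hc0 : c ≠ 0 := by
    rintro rfl
    exact Finset.prod_ne_zero_iff.2 (fun i _ => zpow_ne_zero _ (hα0 i)) (by simpa using hc.symm)
  have hcn : Units.mk0 c hc0 ^ (n : ℤ) = ∏ i, a i ^ m i := by
    ext
    apply (algebraMap K F).injective
    simp only [Units.val_zpow_eq_zpow_val, Units.val_mk0, map_zpow₀, hc, Units.coe_prod, map_prod,
      ← Finset.prod_zpow, ← zpow_mul, mul_comm _ (n : ℤ)]
    simp [zpow_mul, hα]
  refine dvd_of_zpow_eq_prod_zpow hindep hpure (Int.natCast_ne_zero.2 hn)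
    (x := ↑(Units.mk0 c hc0)) ?_ i
  rw [← QuotientGroup.mk_zpow, hcn]
  simp [QuotientGroup.mk_prod]

theorem hasEnoughRootsOfUnity_natCard_rootsOfUnity (R : Type*) [CommRing R] [IsDomain R]
    (n : ℕ) [NeZero n] : HasEnoughRootsOfUnity R (Nat.card (rootsOfUnity n R)) := by
  have : NeZero (Nat.card (rootsOfUnity n R)) := ⟨Nat.card_pos.ne'⟩
  refine HasEnoughRootsOfUnity.of_card_le (Subgroup.card_le_of_le fun ζ hζ => ?_)
  rw [mem_rootsOfUnity]
  exact congrArg Subtype.val (pow_card_eq_one' (x := (⟨ζ, hζ⟩ : rootsOfUnity n R)))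

theorem MonoidHom.exists_apply_eq_prod_zpow {R ι : Type*} [CommRing R] [IsDomain R] [Fintype ι]
    {n : ℕ} [NeZero n] (ψ : (ι → rootsOfUnity n R) →* Rˣ) :
    ∃ m : ι → ℤ, ∀ w, ψ w = ∏ i, ((w i : rootsOfUnity n R) : Rˣ) ^ m i := by
  classical
  have hψ (i : ι) (ζ : rootsOfUnity n R) : ψ (Pi.mulSingle i ζ) ∈ rootsOfUnity n R := by
    have hζ : ζ ^ n = 1 := Subtype.ext ((mem_rootsOfUnity _ _).1 ζ.2)
    rw [mem_rootsOfUnity, ← map_pow, ← Pi.mulSingle_pow, hζ, Pi.mulSingle_one, map_one]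
  choose m hm using fun i =>
    ((ψ.comp (MonoidHom.mulSingle _ i)).codRestrict _ (hψ i)).map_cyclic
  refine ⟨m, fun w => ?_⟩
  conv_lhs => rw [← Finset.univ_prod_mulSingle w, map_prod]
  exact Finset.prod_congr rfl fun i _ => congrArg Subtype.val (hm i (w i))

section Kummer

variable {K L ι : Type*} [Field K] [Field L] [Algebra K L] {n : ℕ}

theorem AlgEquiv.unitsMap_eq_self (σ : L ≃ₐ[K] L) {u : Lˣ}
    (hu : (u : L) ∈ Set.range (algebraMap K L)) : Units.map (σ : L →* L) u = u := by
  obtain ⟨c, hc⟩ := hu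
  ext
  simp [← hc]

theorem AlgEquiv.unitsMap_div_pow_eq_one (σ : L ≃ₐ[K] L) {u : Lˣ}
    (hu : (u : L) ^ n ∈ Set.range (algebraMap K L)) : (Units.map (σ : L →* L) u / u) ^ n = 1 := by
  rw [div_pow, ← map_pow, σ.unitsMap_eq_self (by simpa using hu), div_self']

variable (hμ : ∀ ζ : L, ζ ^ n = 1 → ζ ∈ Set.range (algebraMap K L)) (α : ι → Lˣ)
  (hα : ∀ i, (α i : L) ^ n ∈ Set.range (algebraMap K L))

/-- Multiplicative because its values are roots of unity, which lie in `K` and so are fixed by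
every `σ`. -/
def kummerMap : (L ≃ₐ[K] L) →* (ι → rootsOfUnity n L) where
  toFun σ i := ⟨Units.map (σ : L →* L) (α i) / α i,
    (mem_rootsOfUnity _ _).2 (σ.unitsMap_div_pow_eq_one (hα i))⟩
  map_one' := by
    funext i
    ext
    simp
  map_mul' σ τ := by
    funext i
    ext1
    have hτ := σ.unitsMap_eq_self (u := Units.map (τ : L →* L) (α i) / α i) (hμ _ (by
      rw [← Units.val_pow_eq_pow_val, τ.unitsMap_div_pow_eq_one (hα i), Units.val_one]))
    show Units.map (σ : L →* L) (Units.map (τ : L →* L) (α i)) / α i = _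
    conv_lhs => rw [← div_mul_cancel (Units.map (τ : L →* L) (α i)) (α i), map_mul, hτ]
    exact (mul_div_assoc _ _ _).trans (mul_comm _ _)

@[simp]
theorem kummerMap_apply_coe (σ : L ≃ₐ[K] L) (i : ι) :
    ((kummerMap hμ α hα σ i : rootsOfUnity n L) : Lˣ) = Units.map (σ : L →* L) (α i) / α i :=
  rfl

theorem mem_range_kummerMap [FiniteDimensional K L] [IsGalois K L] [Fintype ι] [NeZero n]
    (ζ : ι → rootsOfUnity n L)
    (hζ : ∀ m : ι → ℤ, ((∏ i, α i ^ m i : Lˣ) : L) ∈ Set.range (algebraMap K L) →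
      ∏ i, ζ i ^ m i = 1) :
    ζ ∈ (kummerMap hμ α hα).range := by
  have := hasEnoughRootsOfUnity_natCard_rootsOfUnity L n
  have : HasEnoughRootsOfUnity L (Monoid.exponent (ι → rootsOfUnity n L)) :=
    .of_dvd L (Monoid.exponent_dvd_of_forall_pow_eq_one fun w => funext fun i => pow_card_eq_one')
  rw [← CommGroup.forall_monoidHom_apply_eq_one_iff L]
  intro ψ hψ
  obtain ⟨m, hm⟩ := ψ.exists_apply_eq_prod_zpow
  have hfixed : ((∏ i, α i ^ m i : Lˣ) : L) ∈ Set.range (algebraMap K L) := by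
    refine (IsGalois.mem_range_algebraMap_iff_fixed _).2 fun σ => ?_
    have hσ := hψ _ ⟨σ, rfl⟩
    rw [hm] at hσ
    have : Units.map (σ : L →* L) (∏ i, α i ^ m i) = ∏ i, α i ^ m i := by
      calc Units.map (σ : L →* L) (∏ i, α i ^ m i)
          = ∏ i, ((kummerMap hμ α hα σ i : Lˣ) * α i) ^ m i := by simp
        _ = (∏ i, (kummerMap hμ α hα σ i : Lˣ) ^ m i) * ∏ i, α i ^ m i := by
          simp only [mul_zpow, Finset.prod_mul_distrib]
        _ = ∏ i, α i ^ m i := by rw [hσ, one_mul]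
    simpa using congrArg Units.val this
  rw [hm]
  simpa using congrArg (fun w : rootsOfUnity n L => (w : Lˣ)) (hζ m hfixed)

end Kummer

theorem exists_algEquiv_apply_eq {K L ι : Type*} [Field K] [Field L] [Algebra K L] {n : ℕ}
    [FiniteDimensional K L] [IsGalois K L] [Fintype ι] [NeZero n]
    (hμ : ∀ ζ : L, ζ ^ n = 1 → ζ ∈ Set.range (algebraMap K L))
    {α β : ι → L} (hα0 : ∀ i, α i ≠ 0) (hα : ∀ i, α i ^ n ∈ Set.range (algebraMap K L))
    (hβ : ∀ i, β i ^ n = α i ^ n)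
    (hdvd : ∀ m : ι → ℤ, ∏ i, α i ^ m i ∈ Set.range (algebraMap K L) → ∀ i, (n : ℤ) ∣ m i) :
    ∃ σ : L ≃ₐ[K] L, ∀ i, σ (α i) = β i := by
  have hβ0 (i : ι) : β i ≠ 0 := fun h => hα0 i <|
    pow_eq_zero_iff (NeZero.ne n) |>.1 (by rw [← hβ, h, zero_pow (NeZero.ne n)])
  have hζn (i : ι) : (β i / α i) ^ n = 1 := by rw [div_pow, hβ, div_self (pow_ne_zero _ (hα0 i))]
  let ζ (i : ι) : rootsOfUnity n L :=
    ⟨Units.mk0 (β i / α i) (div_ne_zero (hβ0 i) (hα0 i)), (mem_rootsOfUnity' _ _).2 (hζn i)⟩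
  have hζ (m : ι → ℤ) (hm : ∏ i, α i ^ m i ∈ Set.range (algebraMap K L)) :
      ∏ i, ζ i ^ m i = 1 := Finset.prod_eq_one fun i _ => by
    obtain ⟨c, hc⟩ := hdvd m hm i
    rw [hc, zpow_mul, zpow_natCast,
      show ζ i ^ n = 1 from Subtype.ext ((mem_rootsOfUnity _ _).1 (ζ i).2), one_zpow]
  obtain ⟨σ, hσ⟩ := mem_range_kummerMap hμ (fun i => Units.mk0 (α i) (hα0 i)) (by simpa using hα) ζ
    fun m hm => hζ m (by simpa using hm)
  refine ⟨σ, fun i => ?_⟩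
  have := congrArg (fun w => ((w i : Lˣ) : L)) hσ
  simp only [ζ, kummerMap_apply_coe, Units.val_div_eq_div_val, Units.coe_map, Units.val_mk0] at this
  exact (div_left_inj' (hα0 i)).1 this

open IntermediateField Polynomial

section Adjoin

variable {K F ι : Type*} [Field K] [Field F] [Algebra K F] {n : ℕ}

theorem mem_adjoin_range_of_pow_eq (hμ : ∀ ζ : F, ζ ^ n = 1 → ζ ∈ Set.range (algebraMap K F))
    {u : ι → F} {x : F} {i : ι} (hu : u i ≠ 0) (hx : x ^ n = u i ^ n) :
    x ∈ adjoin K (Set.range u) := by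
  obtain ⟨c, hc⟩ := hμ (x / u i) (by rw [div_pow, hx, div_self (pow_ne_zero _ hu)])
  rw [← div_mul_cancel₀ x hu, ← hc]
  exact mul_mem (IntermediateField.algebraMap_mem _ c) (subset_adjoin _ _ ⟨i, rfl⟩)

theorem adjoin_range_eq_of_pow_eq (hμ : ∀ ζ : F, ζ ^ n = 1 → ζ ∈ Set.range (algebraMap K F))
    {u v : ι → F} (hu : ∀ i, u i ≠ 0) (hv : ∀ i, v i ≠ 0) (h : ∀ i, u i ^ n = v i ^ n) :
    adjoin K (Set.range u) = adjoin K (Set.range v) := by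
  apply le_antisymm <;> rw [adjoin_le_iff] <;> rintro _ ⟨i, rfl⟩
  · exact mem_adjoin_range_of_pow_eq hμ (hv i) (h i)
  · exact mem_adjoin_range_of_pow_eq hμ (hu i) (h i).symm

theorem isSplittingField_adjoin_range [Fintype ι] [IsAlgClosed F] (hn : n ≠ 0)
    (hμ : ∀ ζ : F, ζ ^ n = 1 → ζ ∈ Set.range (algebraMap K F))
    {α : ι → F} (hα0 : ∀ i, α i ≠ 0) {b : ι → K} (hα : ∀ i, α i ^ n = algebraMap K F (b i)) :
    IsSplittingField K (adjoin K (Set.range α)) (∏ i, (X ^ n - C (b i))) := by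
  have hf : ∏ i, (X ^ n - C (b i)) ≠ 0 :=
    Finset.prod_ne_zero_iff.2 fun i _ => X_pow_sub_C_ne_zero (Nat.pos_of_ne_zero hn) _
  have hroot (x : F) : x ∈ (∏ i, (X ^ n - C (b i))).rootSet F ↔ ∃ i, x ^ n = α i ^ n := by
    simp [mem_rootSet, hf, Finset.prod_eq_zero_iff, sub_eq_zero, hα]
  suffices h : adjoin K (Set.range α) = adjoin K ((∏ i, (X ^ n - C (b i))).rootSet F) from
    h ▸ adjoin_rootSet_isSplittingField (IsAlgClosed.splits _)
  apply le_antisymm <;> rw [adjoin_le_iff]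
  · rintro _ ⟨i, rfl⟩
    exact subset_adjoin _ _ ((hroot _).2 ⟨i, rfl⟩)
  · intro x hx
    obtain ⟨i, hi⟩ := (hroot x).1 hx
    exact mem_adjoin_range_of_pow_eq hμ (hα0 i) hi

end Adjoin

theorem sameFieldType_of_algEquiv {Ω : Type*} [Field Ω] (K : Subfield Ω) {k : ℕ}
    {u v : Fin k → Ω} (σ : adjoin K (Set.range u) ≃ₐ[K] adjoin K (Set.range v))
    (hσ : ∀ j, (σ ⟨u j, subset_adjoin _ _ ⟨j, rfl⟩⟩ : Ω) = v j) : SameFieldType K u v := by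
  have hclosure (w : Fin k → Ω) :
      Subfield.closure ((K : Set Ω) ∪ Set.range w) = (adjoin K (Set.range w)).toSubfield := by
    rw [adjoin_toSubfield, show Set.range (algebraMap K Ω) = K from Subtype.range_coe]
  refine ⟨(RingEquiv.subfieldCongr (hclosure u)).trans
    ((σ.toRingEquiv : _ ≃+* (adjoin K (Set.range v)).toSubfield).trans
      (RingEquiv.subfieldCongr (hclosure v).symm)), fun x hx => ?_, hσ⟩
  exact congrArg Subtype.val (σ.commutes ⟨x, hx⟩)

/-- (Kummer-theoretic uniqueness of roots.) Let `K` be a perfect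
subfield of an algebraically closed field `F` containing all roots of unity `μ` of `F`,
and let `a₁, …, a_k ∈ Kˣ` be simple modulo `μ`: their images in `Kˣ/μ` are linearly
independent and span a pure subgroup. Then any two tuples of `n`-th roots of the `aᵢ` in
`Fˣ` have the same field type over `K`. -/
theorem kummer_roots_same_field_type
    (F : Type*) [Field F] [IsAlgClosed F]
    (K : Subfield F) (hKperf : PerfectField K)
    -- `K` contains all roots of unity of `F`:
    (hroots : ∀ x : F, (∃ n : ℕ, 0 < n ∧ x ^ n = 1) → x ∈ K)
    (k : ℕ) (a : Fin k → Kˣ)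
    -- the images of the `aᵢ` in `Kˣ/μ` are `ℤ`-linearly independent:
    (hindep : LinearIndependent ℤ fun j : Fin k =>
      Additive.ofMul ((a j : Kˣ ⧸ CommGroup.torsion Kˣ)))
    -- and they span a pure subgroup of `Kˣ/μ`:
    (hpure : ∀ (x : Kˣ ⧸ CommGroup.torsion Kˣ) (m : ℤ), m ≠ 0 →
      x ^ m ∈ Subgroup.closure
        (Set.range fun j : Fin k => ((a j : Kˣ ⧸ CommGroup.torsion Kˣ))) →
      x ∈ Subgroup.closure
        (Set.range fun j : Fin k => ((a j : Kˣ ⧸ CommGroup.torsion Kˣ))))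
    (n : ℕ) (hn : 1 ≤ n)
    (α α' : Fin k → Fˣ)
    (hα : ∀ i, (α i : F) ^ n = ((a i : K) : F))
    (hα' : ∀ i, (α' i : F) ^ n = ((a i : K) : F)) :
    SameFieldType K (fun i => (α i : F)) (fun i => (α' i : F)) := by
  have := hKperf
  have hn0 : n ≠ 0 := Nat.one_le_iff_ne_zero.1 hn
  have : NeZero n := ⟨hn0⟩
  have hμ (ζ : F) (hζ : ζ ^ n = 1) : ζ ∈ Set.range (algebraMap K F) :=
    ⟨⟨ζ, hroots ζ ⟨n, hn, hζ⟩⟩, rfl⟩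
  set L := adjoin K (Set.range fun i => (α i : F))
  have hL : adjoin K (Set.range fun i => (α' i : F)) = L :=
    adjoin_range_eq_of_pow_eq hμ (fun i => (α' i).ne_zero) (fun i => (α i).ne_zero)
      fun i => by rw [hα, hα']
  have hsplit := isSplittingField_adjoin_range hn0 hμ (fun i => (α i).ne_zero) hα
  have : FiniteDimensional K L := hsplit.finiteDimensional
  have : IsGalois K L := isGalois_iff.2 ⟨inferInstance, .of_isSplittingField (hFEp := hsplit) _⟩
  have hμL (ζ : L) (hζ : ζ ^ n = 1) : ζ ∈ Set.range (algebraMap K L) := by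
    obtain ⟨c, hc⟩ := hμ ζ (by exact_mod_cast congrArg Subtype.val hζ)
    exact ⟨c, Subtype.ext hc⟩
  let αL (i : Fin k) : L := ⟨α i, subset_adjoin _ _ ⟨i, rfl⟩⟩
  have hαL (i : Fin k) : αL i ^ n = algebraMap K L (a i) := Subtype.ext (hα i)
  obtain ⟨σ, hσ⟩ := exists_algEquiv_apply_eq hμL (α := αL)
    (β := fun i => ⟨α' i, hL ▸ subset_adjoin _ _ ⟨i, rfl⟩⟩)
    (fun i h => (α i).ne_zero (congrArg Subtype.val h)) (fun i => ⟨_, (hαL i).symm⟩)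
    (fun i => Subtype.ext (by simp [αL, hα, hα']))
    (fun m hm => dvd_of_prod_zpow_mem_range hindep hpure hn0 hαL hm)
  exact sameFieldType_of_algEquiv K (σ.trans (equivOfEq hL.symm))
    fun j => congrArg Subtype.val (hσ j)
end
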